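/- Let p : ℝ → ℝ be a continuously differentiable, everywhere positive probability density with respect to Lebesgue measure, and let s : ℝ → ℝ be continuously differentiable. Assume that s(x)·p(x) → 0 as x → ±∞ and that the functions s²·p, s′·p, (p′/p)²·p, and s·p′ are all Lebesgue-integrable on ℝ. Then ∫ (s(x) − p′(x)/p(x))²·p(x) dx = ∫ s(x)²·p(x) dx + 2∫ s′(x)·p(x) dx + ∫ (p′(x)/p(x))²·p(x) dx. -/

import Mathlib

open MeasureTheory Filter

theorem sub_div_sq_mul {K : Type*} [Field K] (a b c : K) (hc : c ≠ 0) :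
    (a - b / c) ^ 2 * c = a ^ 2 * c - 2 * (a * b) + (b / c) ^ 2 * c := by
  field_simp
  ring

theorem integral_sub_div_sq_mul {α : Type*} [MeasurableSpace α] {μ : Measure α}
    {f g w : α → ℝ} (hw : ∀ x, w x ≠ 0) (hf : Integrable (fun x => f x ^ 2 * w x) μ)
    (hfg : Integrable (fun x => f x * g x) μ) (hg : Integrable (fun x => (g x / w x) ^ 2 * w x) μ) :
    ∫ x, (f x - g x / w x) ^ 2 * w x ∂μ =
      (∫ x, f x ^ 2 * w x ∂μ) - 2 * (∫ x, f x * g x ∂μ) + ∫ x, (g x / w x) ^ 2 * w x ∂μ := by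
  simp_rw [sub_div_sq_mul _ _ _ (hw _)]
  have hf_sub : Integrable (fun x => f x ^ 2 * w x - 2 * (f x * g x)) μ :=
    hf.sub (hfg.const_mul 2)
  rw [integral_add hf_sub hg, integral_sub hf (hfg.const_mul 2), integral_const_mul]

theorem score_matching_identity_general (p s : ℝ → ℝ)
    (hp : ContDiff ℝ 1 p) (hppos : ∀ x, 0 < p x)
    (hs : ContDiff ℝ 1 s)
    (htop : Tendsto (fun x => s x * p x) atTop (nhds 0))
    (hbot : Tendsto (fun x => s x * p x) atBot (nhds 0))
    (h1 : Integrable (fun x => (s x) ^ 2 * p x))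
    (h2 : Integrable (fun x => deriv s x * p x))
    (h3 : Integrable (fun x => (deriv p x / p x) ^ 2 * p x))
    (h4 : Integrable (fun x => s x * deriv p x)) :
    ∫ x, (s x - deriv p x / p x) ^ 2 * p x =
      (∫ x, (s x) ^ 2 * p x) + 2 * (∫ x, deriv s x * p x) +
        ∫ x, (deriv p x / p x) ^ 2 * p x := by
  have hcross : ∫ x, s x * deriv p x = -∫ x, deriv s x * p x := by
    simpa using integral_mul_deriv_eq_deriv_mul
      (fun x _ => (hs.differentiable one_ne_zero x).hasDerivAt)
      (fun x _ => (hp.differentiable one_ne_zero x).hasDerivAt) h4 h2 hbot htop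
  rw [integral_sub_div_sq_mul (fun x => (hppos x).ne') h1 h4 h3, hcross]
  ring

/-- Score-matching identity: for a `C¹` positive probability density `p` on `ℝ` and a `C¹`
function `s` with `s·p → 0` at `±∞` and the relevant integrability conditions, expanding the
square and integrating the cross term by parts gives
`∫ (s − p′/p)² p = ∫ s² p + 2 ∫ s′ p + ∫ (p′/p)² p`. -/
theorem score_matching_identity (p s : ℝ → ℝ)
    (hp : ContDiff ℝ 1 p) (hppos : ∀ x, 0 < p x)
    (hpdens : ∫ x, p x = 1)
    (hs : ContDiff ℝ 1 s)
    (htop : Tendsto (fun x => s x * p x) atTop (nhds 0))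
    (hbot : Tendsto (fun x => s x * p x) atBot (nhds 0))
    (h1 : Integrable (fun x => (s x) ^ 2 * p x))
    (h2 : Integrable (fun x => deriv s x * p x))
    (h3 : Integrable (fun x => (deriv p x / p x) ^ 2 * p x))
    (h4 : Integrable (fun x => s x * deriv p x)) :
    ∫ x, (s x - deriv p x / p x) ^ 2 * p x =
      (∫ x, (s x) ^ 2 * p x) + 2 * (∫ x, deriv s x * p x) +
        ∫ x, (deriv p x / p x) ^ 2 * p x :=
  score_matching_identity_general p s hp hppos hs htop hbot h1 h2 h3 h4
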